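/- arXiv:1104.2818 — 6 statements merged into one kernel-verified Lean document; each statement's English description precedes it below -/
import Mathlib

section
/- Let z_1, ..., z_l (l >= 1) be independent Bernoulli random variables each taking value 1 with probability 2/3 and 0 with probability 1/3, and let a_1, ..., a_l be integers with |a_i| >= 1 for all i. Then the probability that a_1 z_1 + ... + a_l z_l is nonzero is at least 4/9. -/
/-!
Write `P_a(c)` for the probability that `∑ aᵢ zᵢ = c` when the `zᵢ` are independent with
`P(zᵢ = 1) = p`. Conditioning on `z₀` gives `P_a(c) = (1 - p) P_a'(c) + p P_a'(c - a₀)` for the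
tail `a'` of `a`, and as `a₀ ≠ 0` the two events on the right are disjoint, so
`P_a(c) ≤ max p (1 - p)`. For `c = 0` and `p ≥ 1/2`, bounding the second term by this once more
gives `P_a(0) ≤ (1 - p) + (2p - 1) p = p² + (1 - p)²`, which is `5/9` for `p = 2/3`.
-/

open Finset

namespace BernoulliSum

variable (p : ℝ)

noncomputable def weight {l : ℕ} (z : Fin l → Bool) : ℝ :=
  ∏ i, if z i then p else 1 - p

def weightedSum {l : ℕ} (a : Fin l → ℤ) (z : Fin l → Bool) : ℤ :=
  ∑ i, a i * if z i then 1 else 0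

noncomputable def probEq {l : ℕ} (a : Fin l → ℤ) (c : ℤ) : ℝ :=
  ∑ z with weightedSum a z = c, weight p z

theorem sum_weight (l : ℕ) : ∑ z : Fin l → Bool, weight p z = 1 := by
  simp only [weight, ← Fintype.prod_sum fun _ (b : Bool) => if b then p else 1 - p]
  simp

theorem weight_nonneg (hp₀ : 0 ≤ p) (hp₁ : p ≤ 1) {l : ℕ} (z : Fin l → Bool) :
    0 ≤ weight p z :=
  prod_nonneg fun i _ => by split_ifs <;> linarith

theorem probEq_nonneg (hp₀ : 0 ≤ p) (hp₁ : p ≤ 1) {l : ℕ} (a : Fin l → ℤ) (c : ℤ) :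
    0 ≤ probEq p a c :=
  sum_nonneg fun z _ => weight_nonneg p hp₀ hp₁ z

theorem probEq_add_probEq_le_one (hp₀ : 0 ≤ p) (hp₁ : p ≤ 1) {l : ℕ} (a : Fin l → ℤ)
    {c c' : ℤ} (h : c ≠ c') : probEq p a c + probEq p a c' ≤ 1 := by
  have hdisj : Disjoint (univ.filter fun z => weightedSum a z = c)
      (univ.filter fun z => weightedSum a z = c') := by
    rw [disjoint_filter]
    exact fun z _ h₁ h₂ => h (h₁ ▸ h₂)
  rw [probEq, probEq, ← sum_union hdisj, ← sum_weight p l]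
  exact sum_le_sum_of_subset_of_nonneg (subset_univ _) fun z _ _ => weight_nonneg p hp₀ hp₁ z

theorem probEq_fin_zero (a : Fin 0 → ℤ) (c : ℤ) : probEq p a c = if c = 0 then 1 else 0 := by
  rcases eq_or_ne c 0 with rfl | hc
  · simp [probEq, weight, weightedSum]
  · simp [probEq, weight, weightedSum, hc, hc.symm]

theorem probEq_succ {l : ℕ} (a : Fin (l + 1) → ℤ) (c : ℤ) :
    probEq p a c = (1 - p) * probEq p (Fin.tail a) c + p * probEq p (Fin.tail a) (c - a 0) := by
  have hc : ∀ s : ℤ, a 0 + s = c ↔ s = c - a 0 := fun s => by omega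
  simp only [probEq, sum_filter, mul_sum]
  rw [← (Fin.consEquiv fun _ => Bool).sum_comp, Fintype.sum_prod_type, Fintype.sum_bool, add_comm]
  simp only [Fin.consEquiv_apply, weight, weightedSum, Fin.prod_univ_succ, Fin.sum_univ_succ,
    Fin.cons_zero, Fin.cons_succ, Fin.tail, Bool.false_eq_true, if_true, if_false, mul_one,
    mul_zero, zero_add, hc, mul_ite]

theorem sum_weight_mul_ite_ne {l : ℕ} (a : Fin l → ℤ) (c : ℤ) :
    ∑ z, weight p z * (if weightedSum a z ≠ c then 1 else 0) = 1 - probEq p a c := by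
  simp only [mul_ite, mul_one, mul_zero, ← sum_filter]
  rw [probEq, eq_sub_iff_add_eq, sum_filter_not_add_sum_filter, sum_weight]

theorem probEq_le_max (hp₀ : 0 ≤ p) (hp₁ : p ≤ 1) {l : ℕ} (a : Fin (l + 1) → ℤ) (ha : a 0 ≠ 0)
    (c : ℤ) : probEq p a c ≤ max p (1 - p) := by
  set A := probEq p (Fin.tail a) c
  set B := probEq p (Fin.tail a) (c - a 0)
  have hAB : A + B ≤ 1 := probEq_add_probEq_le_one p hp₀ hp₁ _ (by omega)
  have hA := probEq_nonneg p hp₀ hp₁ (Fin.tail a) c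
  have hB := probEq_nonneg p hp₀ hp₁ (Fin.tail a) (c - a 0)
  calc probEq p a c = (1 - p) * A + p * B := probEq_succ p a c
    _ ≤ max p (1 - p) * A + max p (1 - p) * B := by
      gcongr
      exacts [le_max_right _ _, le_max_left _ _]
    _ = max p (1 - p) * (A + B) := by ring
    _ ≤ max p (1 - p) := mul_le_of_le_one_right (le_max_of_le_left hp₀) hAB

theorem probEq_zero_le_sq_add_sq (hp₀ : 1 / 2 ≤ p) (hp₁ : p ≤ 1) {l : ℕ} (a : Fin (l + 1) → ℤ)
    (ha : ∀ i, a i ≠ 0) : probEq p a 0 ≤ p ^ 2 + (1 - p) ^ 2 := by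
  rw [probEq_succ]
  cases l with
  | zero =>
    rw [probEq_fin_zero, probEq_fin_zero, if_pos rfl, if_neg (by simpa using ha 0)]
    nlinarith
  | succ n =>
    set A := probEq p (Fin.tail a) 0
    set B := probEq p (Fin.tail a) (0 - a 0)
    have hAB : A + B ≤ 1 := probEq_add_probEq_le_one p (by linarith) hp₁ _ (by simpa using ha 0)
    have hB : B ≤ p :=
      (probEq_le_max p (by linarith) hp₁ (Fin.tail a) (ha 1) _).trans (max_le le_rfl (by linarith))
    calc (1 - p) * A + p * B = (1 - p) * (A + B) + (2 * p - 1) * B := by ring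
      _ ≤ (1 - p) * 1 + (2 * p - 1) * p := by gcongr; linarith
      _ = p ^ 2 + (1 - p) ^ 2 := by ring

end BernoulliSum

theorem stmt7 (l : ℕ) (hl : 1 ≤ l) (a : Fin l → ℤ) (ha : ∀ i, 1 ≤ |a i|) :
    (4:ℝ)/9 ≤ ∑ z : Fin l → Bool,
      (∏ i, (if z i then (2:ℝ)/3 else 1/3)) *
      (if (∑ i, a i * (if z i then 1 else 0)) ≠ 0 then 1 else 0) := by
  obtain ⟨n, rfl⟩ : ∃ n, l = n + 1 := ⟨l - 1, by omega⟩
  have hzero := BernoulliSum.probEq_zero_le_sq_add_sq (2 / 3) (by norm_num) (by norm_num) a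
    fun i => abs_pos.mp (lt_of_lt_of_le one_pos (ha i))
  rw [show (1 : ℝ) / 3 = 1 - 2 / 3 by norm_num]
  refine le_of_le_of_eq ?_ (BernoulliSum.sum_weight_mul_ite_ne (2 / 3) a 0).symm
  linarith
end

section
/- Let z_1, ..., z_l (l >= 1) be independent Bernoulli random variables each taking value 1 with probability 2/3, let a_1, ..., a_l be integers with |a_i| >= 1, and let Y = a_1 z_1 + ... + a_l z_l. Then E[|Y|] >= 4/9. -/
/-! Condition on the first two variables. For `l ≥ 2`, whatever value `r` the rest of the sum
takes, `E[|a₁z₁ + a₂z₂ + r|] = (4|a₁ + a₂ + r| + 2|a₁ + r| + 2|a₂ + r| + |r|) / 9`, and this is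
at least `4/9` by cases: if `r = 0` then `a₁ + r, a₂ + r ≠ 0`; if `a₁ + r = 0` then
`a₁ + a₂ + r = a₂ ≠ 0`; otherwise `|r|, |a₁ + r| ≥ 1` and one of `a₂ + r`, `a₁ + a₂ + r`
(which differ by `a₁`) is nonzero. For `l = 1`, `E[|Y|] = 2|a₁|/3`. -/

open Finset

noncomputable def bernoulliWeight {n : ℕ} (p : ℝ) (z : Fin n → Bool) : ℝ :=
  ∏ i, if z i then p else 1 - p

noncomputable def bernoulliExpectation {n : ℕ} (p : ℝ) (f : (Fin n → Bool) → ℝ) : ℝ :=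
  ∑ z, bernoulliWeight p z * f z

section Bernoulli

variable {n : ℕ} {p : ℝ}

lemma bernoulliWeight_nonneg (hp₀ : 0 ≤ p) (hp₁ : p ≤ 1) (z : Fin n → Bool) :
    0 ≤ bernoulliWeight p z :=
  prod_nonneg fun i _ => by split <;> linarith

lemma sum_bernoulliWeight (p : ℝ) : ∑ z : Fin n → Bool, bernoulliWeight p z = 1 := by
  simpa [bernoulliWeight] using (Fintype.sum_pow (fun b : Bool => if b then p else 1 - p) n).symm

lemma bernoulliWeight_cons (b : Bool) (z : Fin n → Bool) :
    bernoulliWeight p (Fin.cons b z) = (if b then p else 1 - p) * bernoulliWeight p z :=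
  Fin.prod_univ_succ _

lemma le_bernoulliExpectation (hp₀ : 0 ≤ p) (hp₁ : p ≤ 1) {c : ℝ} {f : (Fin n → Bool) → ℝ}
    (hf : ∀ z, c ≤ f z) : c ≤ bernoulliExpectation p f :=
  calc c = ∑ z, bernoulliWeight p z * c := by rw [← sum_mul, sum_bernoulliWeight, one_mul]
    _ ≤ bernoulliExpectation p f :=
      sum_le_sum fun z _ => mul_le_mul_of_nonneg_left (hf z) (bernoulliWeight_nonneg hp₀ hp₁ z)

lemma bernoulliExpectation_succ (f : (Fin (n + 1) → Bool) → ℝ) :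
    bernoulliExpectation p f = bernoulliExpectation p
      fun z => p * f (Fin.cons true z) + (1 - p) * f (Fin.cons false z) := by
  unfold bernoulliExpectation
  rw [← (Fin.consEquiv fun _ => Bool).sum_comp, Fintype.sum_prod_type, Fintype.sum_bool,
    ← sum_add_distrib]
  refine sum_congr rfl fun z _ => ?_
  simp only [Fin.consEquiv, Equiv.coe_fn_mk, bernoulliWeight_cons, Bool.false_eq_true,
    ↓reduceIte]
  ring

end Bernoulli

-- The right-hand side is `9 E[|t z₁ + u z₂ + r|]` for independent `z₁, z₂` with `P(zᵢ = 1) = 2/3`.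
lemma four_le_weighted_abs_add (t u r : ℤ) (ht : 1 ≤ |t|) (hu : 1 ≤ |u|) :
    4 ≤ 4 * |t + (u + r)| + 2 * |t + r| + 2 * |u + r| + |r| := by
  simp only [abs_eq_max_neg] at *
  omega

theorem stmt8 (l : ℕ) (hl : 1 ≤ l) (a : Fin l → ℤ) (ha : ∀ i, 1 ≤ |a i|) :
    (4:ℝ)/9 ≤ ∑ z : Fin l → Bool,
      (∏ i, (if z i then (2:ℝ)/3 else 1/3)) *
      |((∑ i, a i * (if z i then 1 else 0) : ℤ) : ℝ)| := by
  rw [show (1 : ℝ) / 3 = 1 - 2 / 3 by norm_num]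
  change _ ≤ bernoulliExpectation (2 / 3) fun z => |((∑ i, a i * (if z i then 1 else 0) : ℤ) : ℝ)|
  obtain ⟨n, rfl⟩ := Nat.exists_eq_add_of_le' hl
  cases n with
  | zero =>
    rw [bernoulliExpectation_succ]
    refine le_bernoulliExpectation (by norm_num) (by norm_num) fun z => ?_
    have h₀ : (1 : ℝ) ≤ |(a 0 : ℝ)| := by exact_mod_cast ha 0
    simp only [Fin.sum_univ_succ, Fin.cons_zero, univ_eq_empty, sum_empty]
    norm_num
    linarith
  | succ m =>
    rw [bernoulliExpectation_succ, bernoulliExpectation_succ]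
    refine le_bernoulliExpectation (by norm_num) (by norm_num) fun z => ?_
    simp only [Fin.sum_univ_succ, Fin.cons_zero, Fin.cons_succ, Fin.succ_zero_eq_one,
      ↓reduceIte, Bool.false_eq_true, mul_one, mul_zero, zero_add]
    generalize (∑ i, a i.succ.succ * if z i then 1 else 0) = r
    have key : (4 : ℝ) ≤ 4 * |(a 0 : ℝ) + (a 1 + r)| + 2 * |(a 0 : ℝ) + r| + 2 * |(a 1 : ℝ) + r|
        + |(r : ℝ)| := by
      exact_mod_cast four_le_weighted_abs_add (a 0) (a 1) r (ha 0) (ha 1)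
    push_cast
    linarith
end

section
/- Let F be a 3-satisfiable weighted CNF formula in which every unit clause is positive (of the form {x}). Consider the random assignment alpha setting each unit variable (a variable appearing in a unit clause) to true independently with probability 2/3, and every other variable to true independently with probability 1/2. Then for every hard clause C (a unit clause {x}, or a two-literal clause of the form {not x, y} or {not x, not y} with x a unit variable and y not a unit variable), the probability that alpha satisfies C is at least 2/3. -/
open Classical

/-- A clause: a finite set of literals, each a (variable, polarity) pair. -/
abbrev Clause := Finset (ℕ × Bool)

/-- A truth assignment satisfies a clause if some literal evaluates to true. -/
def SatC (τ : ℕ → Bool) (C : Clause) : Prop := ∃ l ∈ C, τ l.1 = l.2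

/-- A CNF formula: clauses are nonempty and contain no variable together with its negation. -/
def IsCNF (F : Finset Clause) : Prop :=
  ∀ C ∈ F, C.Nonempty ∧ ∀ v : ℕ, ¬((v, true) ∈ C ∧ (v, false) ∈ C)

/-- Total weight of a set of clauses. -/
def wt (w : Clause → ℕ) (G : Finset Clause) : ℕ := ∑ C ∈ G, w C

/-- Total weight of the clauses of `G` satisfied by `τ`. -/
noncomputable def satWt (w : Clause → ℕ) (τ : ℕ → Bool) (G : Finset Clause) : ℕ :=
  ∑ C ∈ G.filter (fun C => SatC τ C), w C

/-- `F` is 2-satisfiable. -/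
def Sat2 (F : Finset Clause) : Prop :=
  ∀ C1 ∈ F, ∀ C2 ∈ F, ∃ τ, SatC τ C1 ∧ SatC τ C2

/-- `F` is 3-satisfiable. -/
def Sat3 (F : Finset Clause) : Prop :=
  ∀ C1 ∈ F, ∀ C2 ∈ F, ∀ C3 ∈ F, ∃ τ, SatC τ C1 ∧ SatC τ C2 ∧ SatC τ C3

/-- The set of variables of a formula. -/
def vars (F : Finset Clause) : Finset ℕ := F.sup (fun C => C.image Prod.fst)

/-- The set of clauses of `F` containing a variable of `U`. -/
noncomputable def FU (F : Finset Clause) (U : Finset ℕ) : Finset Clause :=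
  F.filter (fun C => ∃ l ∈ C, l.1 ∈ U)

/-- Unit variables: variables occurring in unit clauses. -/
def unitVars (F : Finset Clause) : Finset ℕ :=
  (F.filter (fun C => C.card = 1)).sup (fun C => C.image Prod.fst)

/-- All unit clauses of `F` are positive. -/
def UnitPos (F : Finset Clause) : Prop :=
  ∀ C ∈ F, C.card = 1 → ∃ x, C = {(x, true)}

/-- A hard clause: a positive unit clause, or a two-literal clause `{¬x, y}` / `{¬x, ¬y}`
with `x` a unit variable and `y` not a unit variable. -/
def IsHard (F : Finset Clause) (C : Clause) : Prop :=
  (∃ x, C = {(x, true)}) ∨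
  (∃ x ∈ unitVars F, ∃ y ∉ unitVars F, ∃ b : Bool, C = {(x, false), (y, b)})

/-- The soft (non-hard) clauses of `F`. -/
noncomputable def softF (F : Finset Clause) : Finset Clause :=
  F.filter (fun C => ¬ IsHard F C)

/-- Two-literal hard clauses. -/
noncomputable def F2set (F : Finset Clause) : Finset Clause :=
  F.filter (fun C => ∃ x ∈ unitVars F, ∃ y ∉ unitVars F, ∃ b : Bool, C = {(x, false), (y, b)})

/-- Non-unit variables occurring in two-literal hard clauses. -/
noncomputable def V2set (F : Finset Clause) : Finset ℕ :=
  ((F2set F).sup (fun C => C.image Prod.fst)) \ unitVars F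

/-- `F` is a hard formula: every clause is hard. -/
def HardFormula (F : Finset Clause) : Prop := ∀ C ∈ F, IsHard F C

/-- `F` is expanding: every set `X` of variables is covered by clauses of total weight at least `|X|`. -/
def Expanding (F : Finset Clause) (w : Clause → ℕ) : Prop :=
  ∀ X ⊆ vars F, X.card ≤ wt w (FU F X)

/-- Extend an assignment on the variables of `F` to all of `ℕ`. -/
noncomputable def extAssign (F : Finset Clause) (α : {v // v ∈ vars F} → Bool) : ℕ → Bool :=
  fun n => if h : n ∈ vars F then α ⟨n, h⟩ else false

/-- The probability that the random assignment (unit variables true with probability 2/3,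
other variables true with probability 1/2, independently) satisfies the clause `C`. -/
noncomputable def probSat (F : Finset Clause) (C : Clause) : ℝ :=
  ∑ α : {v // v ∈ vars F} → Bool,
    (∏ v : {v // v ∈ vars F},
      (if (v : ℕ) ∈ unitVars F then (if α v then (2:ℝ)/3 else 1/3) else 1/2)) *
    (if SatC (extAssign F α) C then 1 else 0)

/-!
A clause whose literals are on distinct variables fails exactly when each of its literals fails, and
under the product distribution these events are independent; so the clause is satisfied with
probability `1 - ∏ₗ Pr[l false]`. A unit clause `{x}` thus holds with probability `1 - 1/3`, and
`{¬x, ±y}` with probability `1 - (2/3)(1/2)`.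
-/

theorem Fintype.sum_pi_prod_mul_prod {ι κ R : Type*} [Fintype ι] [DecidableEq ι] [Fintype κ]
    [CommSemiring R] (p h : ι → κ → R) :
    ∑ α : ι → κ, (∏ i, p i (α i)) * ∏ i, h i (α i) = ∏ i, ∑ b, p i b * h i b := by
  rw [Fintype.prod_sum]
  exact Finset.sum_congr rfl fun α _ => Finset.prod_mul_distrib.symm

noncomputable def litWeight (F : Finset Clause) (v : ℕ) (b : Bool) : ℝ :=
  if v ∈ unitVars F then (if b then 2 / 3 else 1 / 3) else 1 / 2

theorem sum_litWeight (F : Finset Clause) (v : ℕ) : ∑ b, litWeight F v b = 1 := by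
  unfold litWeight
  split_ifs <;> norm_num

theorem mem_vars_of_mem {F : Finset Clause} {C : Clause} (hC : C ∈ F) {l : ℕ × Bool}
    (hl : l ∈ C) : l.1 ∈ vars F :=
  Finset.mem_sup.2 ⟨C, hC, Finset.mem_image_of_mem _ hl⟩

theorem mem_unitVars_of_singleton_mem {F : Finset Clause} {x : ℕ} {s : Bool}
    (h : {(x, s)} ∈ F) : x ∈ unitVars F :=
  Finset.mem_sup.2 ⟨_, Finset.mem_filter.2 ⟨h, Finset.card_singleton _⟩, by simp⟩

theorem extAssign_coe (F : Finset Clause) (α : {v // v ∈ vars F} → Bool)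
    (v : {v // v ∈ vars F}) : extAssign F α v = α v := by
  simp [extAssign]

theorem ite_satC_extAssign_eq_one_sub_prod {F : Finset Clause} {C : Clause}
    (hC : ∀ l ∈ C, l.1 ∈ vars F) (α : {v // v ∈ vars F} → Bool) :
    (if SatC (extAssign F α) C then (1 : ℝ) else 0) =
      1 - ∏ v : {v // v ∈ vars F}, if ((v : ℕ), α v) ∈ C then 0 else 1 := by
  split_ifs with hsat
  · obtain ⟨l, hl, hsat⟩ := hsat
    have hα : α ⟨l.1, hC l hl⟩ = l.2 := (extAssign_coe F α _).symm.trans hsat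
    have hzero : (if (l.1, α ⟨l.1, hC l hl⟩) ∈ C then (0 : ℝ) else 1) = 0 :=
      if_pos (by rw [hα]; exact hl)
    rw [Finset.prod_eq_zero (Finset.mem_univ ⟨l.1, hC l hl⟩) hzero, sub_zero]
  · rw [Finset.prod_eq_one fun v _ => if_neg fun hv => hsat ⟨_, hv, extAssign_coe F α v⟩]
    simp

theorem probSat_eq_one_sub_prod_univ {F : Finset Clause} {C : Clause}
    (hC : ∀ l ∈ C, l.1 ∈ vars F) :
    probSat F C = 1 - ∏ v : {v // v ∈ vars F},
      ∑ b, litWeight F v b * if ((v : ℕ), b) ∈ C then 0 else 1 := by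
  calc probSat F C
      = ∑ α : {v // v ∈ vars F} → Bool, (∏ v : {v // v ∈ vars F}, litWeight F v (α v)) *
          (1 - ∏ v : {v // v ∈ vars F}, if ((v : ℕ), α v) ∈ C then 0 else 1) :=
        Finset.sum_congr rfl fun α _ => by rw [← ite_satC_extAssign_eq_one_sub_prod hC]; rfl
    _ = (∏ v : {v // v ∈ vars F}, ∑ b, litWeight F v b) - ∏ v : {v // v ∈ vars F},
          ∑ b, litWeight F v b * if ((v : ℕ), b) ∈ C then 0 else 1 := by
        simp only [mul_sub, mul_one, Finset.sum_sub_distrib, ← Fintype.prod_sum]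
        exact congrArg _ <| Fintype.sum_pi_prod_mul_prod
          (fun (v : {v // v ∈ vars F}) b => litWeight F v b)
          fun v b => if ((v : ℕ), b) ∈ C then 0 else 1
    _ = _ := by simp only [sum_litWeight, Finset.prod_const_one]

theorem probSat_eq_one_sub_prod {F : Finset Clause} {C : Clause} (hC : ∀ l ∈ C, l.1 ∈ vars F)
    (hinj : Set.InjOn Prod.fst (C : Set (ℕ × Bool))) :
    probSat F C = 1 - ∏ l ∈ C, litWeight F l.1 (!l.2) := by
  set f : ℕ → ℝ := fun n => ∑ b, litWeight F n b * if (n, b) ∈ C then 0 else 1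
  have hf : ∀ l ∈ C, f l.1 = litWeight F l.1 (!l.2) := by
    intro l hl
    have hpol : ∀ b, (l.1, b) ∈ C ↔ b = l.2 :=
      fun b => ⟨fun h => congrArg Prod.snd (hinj h hl rfl), fun h => h ▸ hl⟩
    obtain ⟨n, s⟩ := l
    cases s <;> simp [f, hpol]
  have hoff : ∀ n ∈ vars F, n ∉ C.image Prod.fst → f n = 1 := fun n _ hn => by
    have hnC : ∀ b, (n, b) ∉ C := fun b h => hn (Finset.mem_image_of_mem Prod.fst h)
    simp only [f, hnC, if_false, mul_one, sum_litWeight]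
  rw [probSat_eq_one_sub_prod_univ hC, Finset.prod_coe_sort (vars F) f,
    ← Finset.prod_subset (by simpa [Finset.image_subset_iff] using hC) hoff,
    Finset.prod_image hinj, Finset.prod_congr rfl hf]

theorem stmt10_general (F : Finset Clause)
    (C : Clause) (hC : C ∈ F) (hhard : IsHard F C) :
    (2:ℝ)/3 ≤ probSat F C := by
  have hvars : ∀ l ∈ C, l.1 ∈ vars F := fun l hl => mem_vars_of_mem hC hl
  rcases hhard with ⟨x, rfl⟩ | ⟨x, hx, y, hy, b, rfl⟩
  · rw [probSat_eq_one_sub_prod hvars (by simp)]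
    norm_num [litWeight, mem_unitVars_of_singleton_mem hC]
  · have hxy : x ≠ y := fun h => hy (h ▸ hx)
    rw [probSat_eq_one_sub_prod hvars (by simp [Set.InjOn, hxy, hxy.symm]),
      Finset.prod_pair (by simp [hxy])]
    norm_num [litWeight, hx, hy]

theorem stmt10 (F : Finset Clause) (w : Clause → ℕ)
    (hF : IsCNF F) (hw : ∀ C ∈ F, 0 < w C) (h3 : Sat3 F) (hup : UnitPos F)
    (C : Clause) (hC : C ∈ F) (hhard : IsHard F C) :
    (2:ℝ)/3 ≤ probSat F C :=
  stmt10_general F C hC hhard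
end

section
/- Let F be a 3-satisfiable weighted CNF formula in which every unit clause is positive. Under the random assignment alpha setting each unit variable to true independently with probability 2/3 and every other variable to true with probability 1/2, every non-hard clause C of F is satisfied with probability at least 19/27. -/
open Classical

noncomputable def pvar (F : Finset Clause) (v : ℕ) (b : Bool) : ℝ :=
  if v ∈ unitVars F then (if b then (2:ℝ)/3 else 1/3) else 1/2

lemma pvar_nonneg (F : Finset Clause) (v : ℕ) (b : Bool) : 0 ≤ pvar F v b := by
  unfold pvar; split <;> first | (split <;> norm_num) | norm_num

lemma pvar_le (F : Finset Clause) (v : ℕ) (b : Bool) : pvar F v b ≤ 2/3 := by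
  unfold pvar; split <;> first | (split <;> norm_num) | norm_num

lemma sum_prod_bool {ι : Type*} [DecidableEq ι] [Fintype ι] (q : ι → Bool → ℝ) :
    ∑ α : ι → Bool, ∏ v, q v (α v) = ∏ v, (q v true + q v false) := by
  classical
  have h := Finset.prod_univ_sum (fun _ : ι => (Finset.univ : Finset Bool)) q
  rw [Fintype.piFinset_univ] at h
  rw [← h]
  apply Finset.prod_congr rfl
  intro v _
  rw [Fintype.sum_bool]

lemma pvar_add (F : Finset Clause) (v : ℕ) : pvar F v true + pvar F v false = 1 := by
  unfold pvar; split <;> norm_num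

lemma mem_vars_of {F : Finset Clause} {C : Clause} {l : ℕ × Bool} (hC : C ∈ F) (hl : l ∈ C) :
    l.1 ∈ vars F := by
  rw [vars, Finset.mem_sup]
  exact ⟨C, hC, Finset.mem_image_of_mem Prod.fst hl⟩

lemma unit_clause_mem {F : Finset Clause} (hup : UnitPos F) {x : ℕ} (hx : x ∈ unitVars F) :
    ({(x, true)} : Clause) ∈ F := by
  rw [unitVars, Finset.mem_sup] at hx
  obtain ⟨D, hD, hxD⟩ := hx
  rw [Finset.mem_filter] at hD
  obtain ⟨y, rfl⟩ := hup D hD.1 hD.2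
  simp only [Finset.image_singleton, Finset.mem_singleton] at hxD
  subst hxD
  exact hD.1

lemma prod_le_pow {ι : Type*} (s : Finset ι) (f : ι → ℝ) (c : ℝ) (hc : 0 ≤ c)
    (h : ∀ i ∈ s, 0 ≤ f i ∧ f i ≤ c) : ∏ i ∈ s, f i ≤ c ^ s.card := by
  classical
  induction s using Finset.induction_on with
  | empty => simp
  | @insert a s hna ih =>
    rw [Finset.prod_insert hna, Finset.card_insert_of_notMem hna, pow_succ, mul_comm (c ^ s.card)]
    have h1 := h a (Finset.mem_insert_self a s)
    have h2 : ∏ i ∈ s, f i ≤ c ^ s.card := ih (fun i hi => h i (Finset.mem_insert_of_mem hi))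
    have hp : 0 ≤ ∏ i ∈ s, f i := Finset.prod_nonneg (fun i hi => (h i (Finset.mem_insert_of_mem hi)).1)
    exact mul_le_mul h1.2 h2 hp hc

lemma probSat_eq (F : Finset Clause) (C : Clause) (hF : IsCNF F) (hC : C ∈ F) :
    probSat F C = 1 - ∏ l ∈ C, pvar F l.1 (!l.2) := by
  classical
  set q : {v // v ∈ vars F} → Bool → ℝ :=
    fun v b => if ((v : ℕ), b) ∈ C then (0:ℝ) else pvar F (v : ℕ) b with hqdef
  have hq : ∀ (α : {v // v ∈ vars F} → Bool),
      (∏ v : {v // v ∈ vars F},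
        (if (v : ℕ) ∈ unitVars F then (if α v then (2:ℝ)/3 else 1/3) else 1/2)) *
      (if SatC (extAssign F α) C then 1 else 0)
      = (∏ v : {v // v ∈ vars F}, pvar F (v : ℕ) (α v))
        - ∏ v : {v // v ∈ vars F}, q v (α v) := by
    intro α
    have hW : (∏ v : {v // v ∈ vars F},
        (if (v : ℕ) ∈ unitVars F then (if α v then (2:ℝ)/3 else 1/3) else 1/2))
        = ∏ v : {v // v ∈ vars F}, pvar F (v : ℕ) (α v) := by
      apply Finset.prod_congr rfl
      intro v _; unfold pvar; cases α v <;> rfl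
    rw [hW]
    by_cases hs : SatC (extAssign F α) C
    · rw [if_pos hs, mul_one]
      obtain ⟨l, hl, hsat⟩ := hs
      have hv : l.1 ∈ vars F := mem_vars_of hC hl
      have hz : ∏ v : {v // v ∈ vars F}, q v (α v) = 0 := by
        apply Finset.prod_eq_zero (Finset.mem_univ (⟨l.1, hv⟩ : {v // v ∈ vars F}))
        have hαl : α ⟨l.1, hv⟩ = l.2 := by
          have := hsat; rwa [extAssign, dif_pos hv] at this
        rw [hqdef]
        simp only []
        rw [if_pos]
        rw [hαl]
        exact hl
      rw [hz, sub_zero]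
    · rw [if_neg hs, mul_zero]
      have : ∏ v : {v // v ∈ vars F}, q v (α v)
          = ∏ v : {v // v ∈ vars F}, pvar F (v : ℕ) (α v) := by
        apply Finset.prod_congr rfl
        intro v _
        rw [hqdef]
        simp only []
        rw [if_neg]
        intro hmem
        apply hs
        refine ⟨((v : ℕ), α v), hmem, ?_⟩
        simp only [extAssign]
        rw [dif_pos v.2]
      rw [this, sub_self]
  rw [probSat]
  simp only [hq]
  rw [Finset.sum_sub_distrib]
  have hsum1 : ∑ α : {v // v ∈ vars F} → Bool, ∏ v : {v // v ∈ vars F}, pvar F (v : ℕ) (α v) = 1 := by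
    rw [← Fintype.piFinset_univ, ← Finset.prod_univ_sum]
    rw [Finset.prod_eq_one]
    intro v _
    rw [Fintype.sum_bool]
    exact pvar_add F v
  have hsum2 : (∑ α : {v // v ∈ vars F} → Bool, ∏ v : {v // v ∈ vars F}, q v (α v))
      = ∏ l ∈ C, pvar F l.1 (!l.2) := by
    rw [sum_prod_bool q]
    set g : {v // v ∈ vars F} → ℝ := fun v => q v true + q v false with hg
    set S : Finset {v // v ∈ vars F} :=
      Finset.univ.filter (fun v => ((v : ℕ), true) ∈ C ∨ ((v : ℕ), false) ∈ C) with hS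
    have hrestrict : ∏ v : {v // v ∈ vars F}, g v = ∏ v ∈ S, g v := by
      symm
      apply Finset.prod_subset (Finset.filter_subset _ _)
      intro v _ hvS
      simp only [hS, Finset.mem_filter, Finset.mem_univ, true_and, not_or] at hvS
      simp only [hg, hqdef, if_neg hvS.1, if_neg hvS.2]
      exact pvar_add F (v : ℕ)
    rw [hrestrict]
    symm
    apply Finset.prod_bij (i := fun (l : ℕ × Bool) (hl : l ∈ C) =>
      (⟨l.1, mem_vars_of hC hl⟩ : {v // v ∈ vars F}))
    · intro l hl
      simp only [hS, Finset.mem_filter, Finset.mem_univ, true_and]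
      cases hb : l.2
      · right; rw [← hb]; exact hl
      · left; rw [← hb]; exact hl
    · intro l hl l' hl' heq
      have h1 : l.1 = l'.1 := congrArg Subtype.val heq
      by_contra hne
      have h2 : l.2 ≠ l'.2 := fun h => hne (Prod.ext h1 h)
      have hcnf := (hF C hC).2 l.1
      apply hcnf
      cases hb : l.2
      · cases hb' : l'.2
        · exact absurd (hb.trans hb'.symm) h2
        · constructor
          · rw [h1, ← hb']; exact hl'
          · rw [← hb]; exact hl
      · cases hb' : l'.2
        · constructor
          · rw [← hb]; exact hl
          · rw [h1, ← hb']; exact hl'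
        · exact absurd (hb.trans hb'.symm) h2
    · intro v hv
      simp only [hS, Finset.mem_filter, Finset.mem_univ, true_and] at hv
      cases hv with
      | inl h => exact ⟨((v : ℕ), true), h, rfl⟩
      | inr h => exact ⟨((v : ℕ), false), h, rfl⟩
    · intro l hl
      have hcnf := (hF C hC).2 l.1
      simp only [hg, hqdef]
      cases hb : l.2
      · have hmemf : (l.1, false) ∈ C := by rw [← hb]; exact hl
        have hmemt : (l.1, true) ∉ C := fun h => hcnf ⟨h, hmemf⟩
        rw [if_neg hmemt, if_pos hmemf, add_zero]; simp
      · have hmemt : (l.1, true) ∈ C := by rw [← hb]; exact hl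
        have hmemf : (l.1, false) ∉ C := fun h => hcnf ⟨hmemt, h⟩
        rw [if_pos hmemt, if_neg hmemf, zero_add]; simp
  rw [hsum1, hsum2]

theorem stmt11 (F : Finset Clause) (w : Clause → ℕ)
    (hF : IsCNF F) (hw : ∀ C ∈ F, 0 < w C) (h3 : Sat3 F) (hup : UnitPos F)
    (C : Clause) (hC : C ∈ F) (hsoft : ¬ IsHard F C) :
    (19:ℝ)/27 ≤ probSat F C := by
  classical
  rw [probSat_eq F C hF hC]
  have hnn : ∀ l ∈ C, 0 ≤ pvar F l.1 (!l.2) ∧ pvar F l.1 (!l.2) ≤ 2/3 :=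
    fun l _ => ⟨pvar_nonneg F l.1 (!l.2), pvar_le F l.1 (!l.2)⟩
  -- card cases
  rcases Nat.lt_or_ge C.card 3 with hcard | hcard
  · interval_cases h : C.card
    · exact absurd (Finset.card_eq_zero.mp h) (Finset.nonempty_iff_ne_empty.mp (hF C hC).1)
    · obtain ⟨x, rfl⟩ := hup C hC h
      exact absurd (Or.inl ⟨x, rfl⟩) hsoft
    · -- two literals
      obtain ⟨a, b, hab, hCab⟩ := Finset.card_eq_two.mp h
      have hprod : ∏ l ∈ C, pvar F l.1 (!l.2) = pvar F a.1 (!a.2) * pvar F b.1 (!b.2) := by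
        rw [hCab, Finset.prod_pair hab]
      by_cases hneg : ∃ l ∈ C, l.2 = false ∧ l.1 ∈ unitVars F
      · obtain ⟨l, hl, hlf, hlu⟩ := hneg
        -- the other literal m
        have hlab : l = a ∨ l = b := by
          rw [hCab] at hl; simpa using hl
        obtain ⟨m, hlm, hm⟩ : ∃ m, l ≠ m ∧ C = {l, m} := by
          cases hlab with
          | inl h' => subst h'; exact ⟨b, hab, hCab⟩
          | inr h' => subst h'; exact ⟨a, fun he => hab he.symm,
              by rw [hCab, Finset.pair_comm]⟩
        have hmC : m ∈ C := by rw [hm]; simp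
        -- m.1 must be a unit variable, else C is hard
        have hmu : m.1 ∈ unitVars F := by
          by_contra hmu
          apply hsoft
          right
          exact ⟨l.1, hlu, m.1, hmu, m.2, by
            rw [hm, ← hlf]⟩
        -- m.2 must be true, else 3-satisfiability is violated
        have hmt : m.2 = true := by
          by_contra hmt
          rw [Bool.not_eq_true] at hmt
          obtain ⟨τ, h1, h2, h3'⟩ := h3 ({(l.1, true)} : Clause) (unit_clause_mem hup hlu)
            ({(m.1, true)} : Clause) (unit_clause_mem hup hmu) C hC
          obtain ⟨l1, hl1, hl1s⟩ := h1
          obtain ⟨l2, hl2, hl2s⟩ := h2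
          simp only [Finset.mem_singleton] at hl1 hl2
          subst hl1; subst hl2
          obtain ⟨l3, hl3, hl3s⟩ := h3'
          rw [hm] at hl3
          simp only [Finset.mem_insert, Finset.mem_singleton] at hl3
          cases hl3 with
          | inl h' => subst h'; rw [hlf] at hl3s; rw [hl3s] at hl1s; exact Bool.false_ne_true hl1s
          | inr h' => subst h'; rw [hmt] at hl3s; rw [hl3s] at hl2s; exact Bool.false_ne_true hl2s
        have hlv : pvar F l.1 (!l.2) = 2/3 := by
          rw [hlf]; show pvar F l.1 true = 2/3; unfold pvar; rw [if_pos hlu]; norm_num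
        have hmv : pvar F m.1 (!m.2) = 1/3 := by
          rw [hmt]; show pvar F m.1 false = 1/3; unfold pvar; rw [if_pos hmu]; norm_num
        have : ∏ x ∈ C, pvar F x.1 (!x.2) = 2/3 * (1/3) := by
          rw [hm, Finset.prod_pair hlm, hlv, hmv]
        rw [this]; norm_num
      · push_neg at hneg
        have hhalf : ∀ l ∈ C, pvar F l.1 (!l.2) ≤ 1/2 := by
          intro l hl
          cases hb : l.2
          · have := hneg l hl hb
            show pvar F l.1 (!false) ≤ 1/2
            unfold pvar; rw [if_neg this]
          · show pvar F l.1 (!true) ≤ 1/2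
            unfold pvar; split <;> norm_num
        have hple : ∏ l ∈ C, pvar F l.1 (!l.2) ≤ (1/2) ^ C.card :=
          prod_le_pow C _ (1/2) (by norm_num)
            (fun l hl => ⟨pvar_nonneg F l.1 (!l.2), hhalf l hl⟩)
        rw [h] at hple
        norm_num at hple ⊢
        linarith
  · -- at least three literals
    have hple : ∏ l ∈ C, pvar F l.1 (!l.2) ≤ (2/3) ^ C.card :=
      prod_le_pow C _ (2/3) (by norm_num) hnn
    have hmono : ((2:ℝ)/3) ^ C.card ≤ (2/3) ^ 3 :=
      pow_le_pow_of_le_one (by norm_num) (by norm_num) hcard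
    have : ∏ l ∈ C, pvar F l.1 (!l.2) ≤ 8/27 := by
      calc ∏ l ∈ C, pvar F l.1 (!l.2) ≤ (2/3) ^ C.card := hple
        _ ≤ (2/3:ℝ) ^ 3 := hmono
        _ = 8/27 := by norm_num
    linarith
end

section
/- Let F be a hard 3-satisfiable weighted CNF formula, i.e., every clause is either a positive unit clause {x_i} or of the form {not x_i, y_j} or {not x_i, not y_j} where x_i is a unit variable and y_j is not. Let n2 be the number of variables y_j that occur in two-literal clauses but not in unit clauses. Then there exists an assignment tau with sat_tau(F) >= (2/3) w(F) + (2/9) n2. -/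
open Classical

/-!
Sample the unit variables independently, each true with probability 2/3 (a uniform
`σ x : Fin 3`, read as true iff `σ x ≠ 0`), and give every other variable `y` the value that
falsifies less weight among the clauses `{¬x, ±y}`. A unit clause is then falsified with
probability 1/3. For `y`, let `L₊`, `L₋` be the weights falsified by `y := true`, `y := false`;
then `min L₊ L₋ = (L₊ + L₋ - |L₊ - L₋|) / 2` and `𝔼 (L₊ + L₋) = 2/3 · w_y`. Since 3-satisfiability
forbids `{¬x, y}` and `{¬x, ¬y}` together, `L₊ - L₋ = ∑ₓ [x true] aₓ` with integers `aₓ`, not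
all zero, and such a sum has `𝔼 |·| ≥ 4/9`. So the expected falsified weight is at most
`w(F)/3 - 2/9 · n₂`, and some assignment does at least that well.
-/

open scoped BigOperators

theorem Fintype.expect_eq_expect_expect_add {G κ M : Type*} [AddCommGroup G] [Fintype G]
    [Fintype κ] [Nonempty κ] [AddCommMonoid M] [Module ℚ≥0 M] (c : κ → G) (f : G → M) :
    𝔼 g, f g = 𝔼 g, 𝔼 k, f (g + c k) := by
  rw [Finset.expect_comm]
  simp only [fun k => Fintype.expect_equiv (Equiv.addRight (c k)) (fun g => f (g + c k)) f
    fun _ => rfl]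
  rw [Fintype.expect_const]

lemma Fintype.expect_comp_apply {ι α M : Type*} [Fintype ι] [DecidableEq ι] [AddCommGroup α]
    [Fintype α] [AddCommMonoid M] [Module ℚ≥0 M] (i : ι) (f : α → M) :
    𝔼 σ : ι → α, f (σ i) = 𝔼 u, f u := by
  rw [Fintype.expect_eq_expect_expect_add (Pi.single i)]
  refine (Finset.expect_congr rfl fun σ _ => ?_).trans (Fintype.expect_const _)
  simpa using Fintype.expect_equiv (Equiv.addLeft (σ i)) _ f fun _ => rfl

lemma expect_ite_ne_zero (c : ℝ) : 𝔼 u : Fin 3, (if u ≠ 0 then c else 0) = 2 / 3 * c := by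
  rw [Fintype.expect_eq_sum_div_card, Fin.sum_univ_three]
  simp only [ne_eq, not_true_eq_false, ↓reduceIte, one_ne_zero, not_false_eq_true, Fin.reduceEq,
    zero_add, Fintype.card_fin]
  ring

lemma expect_ite_eq_zero (c : ℝ) : 𝔼 u : Fin 3, (if u = 0 then c else 0) = c / 3 := by
  rw [Fintype.expect_eq_sum_div_card, Fin.sum_univ_three]
  simp

lemma four_ninths_le_expect_abs (a₁ a₂ D : ℤ) (h₁ : a₁ ≠ 0) (h₂ : a₂ ≠ 0) :
    (4 / 9 : ℝ) ≤ 𝔼 p : Fin 3 × Fin 3,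
      ((|(if p.1 ≠ 0 then a₁ else 0) + (if p.2 ≠ 0 then a₂ else 0) + D| : ℤ) : ℝ) := by
  have key : 4 ≤ ∑ p : Fin 3 × Fin 3,
      |(if p.1 ≠ 0 then a₁ else 0) + (if p.2 ≠ 0 then a₂ else 0) + D| := by
    simp only [Fintype.sum_prod_type, Fin.sum_univ_three, ne_eq, Fin.reduceEq, not_true_eq_false,
      not_false_eq_true, ↓reduceIte, zero_add, add_zero]
    -- the weight-4 value `a₁ + a₂ + D` vanishes only if both weight-2 values are nonzero
    rcases abs_cases D with h | h <;> rcases abs_cases (a₂ + D) with h' | h' <;>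
      rcases abs_cases (a₁ + D) with h'' | h'' <;> rcases abs_cases (a₁ + a₂ + D) with k | k <;>
      omega
  have key' := (Int.cast_le (R := ℝ)).mpr key
  rw [Fintype.expect_eq_sum_div_card, Fintype.card_prod, Fintype.card_fin]
  push_cast at key' ⊢
  linarith

section SignedSum

variable {ι : Type*} [Fintype ι] [DecidableEq ι]

lemma sum_ite_add_single_add_single {i₁ i₂ : ι} (hne : i₂ ≠ i₁) (a : ι → ℤ) (σ : ι → Fin 3)
    (s t : Fin 3) :
    ∑ i, (if (σ + Pi.single i₁ s + Pi.single i₂ t : ι → Fin 3) i ≠ 0 then a i else 0) =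
      (if σ i₁ + s ≠ 0 then a i₁ else 0) + (if σ i₂ + t ≠ 0 then a i₂ else 0) +
        ∑ i ∈ {i₁, i₂}ᶜ, (if σ i ≠ 0 then a i else 0) := by
  rw [← Finset.sum_add_sum_compl {i₁, i₂}, Finset.sum_pair hne.symm]
  congr 1
  · simp [hne, hne.symm]
  · refine Finset.sum_congr rfl fun i hi => ?_
    simp only [Finset.mem_compl, Finset.mem_insert, Finset.mem_singleton, not_or] at hi
    simp [hi.1, hi.2]

lemma four_ninths_le_expect_abs_sum (a : ι → ℤ) (ha : a ≠ 0) :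
    (4 / 9 : ℝ) ≤ 𝔼 σ : ι → Fin 3, ((|∑ i, if σ i ≠ 0 then a i else 0| : ℤ) : ℝ) := by
  obtain ⟨i₁, h₁⟩ : ∃ i, a i ≠ 0 := Function.ne_iff.mp ha
  by_cases htwo : ∃ i₂, i₂ ≠ i₁ ∧ a i₂ ≠ 0
  · obtain ⟨i₂, hne, h₂⟩ := htwo
    -- average over the translates of `σ` in the coordinates `i₁`, `i₂`
    rw [Fintype.expect_eq_expect_expect_add
      (fun p : Fin 3 × Fin 3 => Pi.single i₁ p.1 + Pi.single i₂ p.2)]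
    refine Finset.le_expect Finset.univ_nonempty fun σ _ => ?_
    simp only [← add_assoc, sum_ite_add_single_add_single hne]
    exact (four_ninths_le_expect_abs _ _ _ h₁ h₂).trans_eq
      (Fintype.expect_equiv (Equiv.addLeft (σ i₁, σ i₂)) _ _ fun _ => rfl).symm
  · push Not at htwo
    have hsum : ∀ σ : ι → Fin 3,
        ∑ i, (if σ i ≠ 0 then a i else 0) = if σ i₁ ≠ 0 then a i₁ else 0 :=
      fun σ => Fintype.sum_eq_single i₁ fun i hi => by simp [htwo i hi]
    simp only [hsum, apply_ite, abs_zero, Int.cast_zero]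
    rw [Fintype.expect_comp_apply i₁ (fun u => if u ≠ 0 then ((|a i₁| : ℤ) : ℝ) else 0),
      expect_ite_ne_zero]
    have : (1 : ℝ) ≤ ((|a i₁| : ℤ) : ℝ) := by exact_mod_cast Int.one_le_abs h₁
    linarith

end SignedSum

lemma satC_singleton_iff {τ : ℕ → Bool} {x : ℕ} {b : Bool} : SatC τ {(x, b)} ↔ τ x = b := by
  simp [SatC]

lemma satC_pair_iff {τ : ℕ → Bool} {x y : ℕ} {b c : Bool} :
    SatC τ {(x, b), (y, c)} ↔ τ x = b ∨ τ y = c := by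
  simp [SatC]

lemma eq_of_pair_eq_pair {x y x' y' : ℕ} {b b' : Bool} (h : x ≠ y') (h' : x' ≠ y)
    (he : ({(x, false), (y, b)} : Clause) = {(x', false), (y', b')}) :
    x = x' ∧ y = y' ∧ b = b' := by
  have h1 : (x, false) ∈ ({(x', false), (y', b')} : Clause) := he ▸ by simp
  have h2 : (y, b) ∈ ({(x', false), (y', b')} : Clause) := he ▸ by simp
  simp only [Finset.mem_insert, Finset.mem_singleton, Prod.mk.injEq] at h1 h2
  grind

lemma mem_unitVars_iff {F : Finset Clause} {x : ℕ} :
    x ∈ unitVars F ↔ ∃ C ∈ F, C.card = 1 ∧ x ∈ C.image Prod.fst := by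
  simp [unitVars, Finset.mem_sup, and_assoc]

lemma ne_of_mem_unitVars {F : Finset Clause} {x y : ℕ} (hx : x ∈ unitVars F)
    (hy : y ∉ unitVars F) : x ≠ y :=
  fun h => hy (h ▸ hx)

lemma card_pair_ne_one {x y : ℕ} {b c : Bool} (h : x ≠ y) :
    ({(x, b), (y, c)} : Clause).card ≠ 1 := by
  rw [Finset.card_pair (by simp [h])]
  decide

lemma Sat3.not_pair_mem_and_pair_mem {F : Finset Clause} (h3 : Sat3 F) {x y : ℕ}
    (hx : ({(x, true)} : Clause) ∈ F) :
    ¬(({(x, false), (y, true)} : Clause) ∈ F ∧ ({(x, false), (y, false)} : Clause) ∈ F) := by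
  rintro ⟨h₁, h₂⟩
  obtain ⟨τ, hx, h₁, h₂⟩ := h3 _ hx _ h₁ _ h₂
  simp only [satC_singleton_iff, satC_pair_iff] at hx h₁ h₂
  simp_all

namespace HardFormula

variable {F : Finset Clause}

lemma eq_singleton_of_card_eq_one (hF : HardFormula F) {C : Clause} (hC : C ∈ F)
    (hcard : C.card = 1) : ∃ x ∈ unitVars F, C = {(x, true)} := by
  rcases hF C hC with ⟨x, rfl⟩ | ⟨x, hx, y, hy, b, rfl⟩
  · exact ⟨x, mem_unitVars_iff.mpr ⟨_, hC, hcard, by simp⟩, rfl⟩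
  · exact absurd hcard (card_pair_ne_one (ne_of_mem_unitVars hx hy))

lemma singleton_mem (hF : HardFormula F) {x : ℕ} (hx : x ∈ unitVars F) :
    ({(x, true)} : Clause) ∈ F := by
  obtain ⟨C, hC, hcard, hxC⟩ := mem_unitVars_iff.mp hx
  obtain ⟨x', -, rfl⟩ := hF.eq_singleton_of_card_eq_one hC hcard
  simp only [Finset.image_singleton, Finset.mem_singleton] at hxC
  rwa [hxC]

theorem sum_eq_units_add_pairs {M : Type*} [AddCommMonoid M] (hF : HardFormula F)
    (f : Clause → M) :
    ∑ C ∈ F, f C = ∑ x ∈ unitVars F, f {(x, true)} +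
      ∑ y ∈ vars F \ unitVars F, ∑ x ∈ unitVars F, ∑ b : Bool,
        if ({(x, false), (y, b)} : Clause) ∈ F then f {(x, false), (y, b)} else 0 := by
  rw [← Finset.sum_filter_add_sum_filter_not F (fun C => C.card = 1)]
  congr 1
  · refine (Finset.sum_nbij (fun x => {(x, true)}) (fun x hx => ?_) ?_ ?_ fun _ _ => rfl).symm
    · simp [hF.singleton_mem hx]
    · intro x _ x' _ h
      simpa using h
    · intro C hC
      obtain ⟨hCF, hcard⟩ := Finset.mem_filter.mp hC
      obtain ⟨x, hx, rfl⟩ := hF.eq_singleton_of_card_eq_one hCF hcard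
      exact ⟨x, hx, rfl⟩
  · let pair : ℕ × ℕ × Bool → Clause := fun p => {(p.2.1, false), (p.1, p.2.2)}
    calc ∑ C ∈ F with ¬C.card = 1, f C
        = ∑ p ∈ (vars F \ unitVars F) ×ˢ unitVars F ×ˢ Finset.univ with pair p ∈ F,
            f (pair p) := by
          refine (Finset.sum_nbij pair (fun p hp => ?_) (fun p hp p' hp' h => ?_) (fun C hC => ?_)
            fun _ _ => rfl).symm
          · simp only [Finset.mem_filter, Finset.mem_product, Finset.mem_sdiff] at hp ⊢
            exact ⟨hp.2, card_pair_ne_one (ne_of_mem_unitVars hp.1.2.1 hp.1.1.2)⟩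
          · simp only [Finset.coe_filter, Finset.mem_product, Finset.mem_sdiff,
              Set.mem_ofPred_eq] at hp hp'
            obtain ⟨hx, hy, hb⟩ := eq_of_pair_eq_pair (ne_of_mem_unitVars hp.1.2.1 hp'.1.1.2)
              (ne_of_mem_unitVars hp'.1.2.1 hp.1.1.2) h
            exact Prod.ext hy (Prod.ext hx hb)
          · obtain ⟨hCF, hcard⟩ := Finset.mem_filter.mp hC
            rcases hF C hCF with ⟨x, rfl⟩ | ⟨x, hx, y, hy, b, rfl⟩
            · exact absurd (Finset.card_singleton _) hcard
            · refine ⟨(y, x, b), ?_, rfl⟩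
              simp only [Finset.coe_filter, Finset.mem_product, Finset.mem_sdiff,
                Finset.mem_univ, Set.mem_ofPred_eq]
              exact ⟨⟨⟨Finset.mem_sup.mpr ⟨_, hCF, by simp⟩, hy⟩, hx, trivial⟩, hCF⟩
      _ = _ := by
          rw [Finset.sum_filter, Finset.sum_product,
            Finset.sum_congr rfl fun y _ => Finset.sum_product ..]

end HardFormula

section WeightedAssignment

variable (F : Finset Clause) (w : Clause → ℕ)

noncomputable def unsatWt (τ : ℕ → Bool) (G : Finset Clause) : ℕ :=
  ∑ C ∈ G, if SatC τ C then 0 else w C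

lemma satWt_add_unsatWt (τ : ℕ → Bool) (G : Finset Clause) :
    satWt w τ G + unsatWt w τ G = wt w G := by
  rw [satWt, unsatWt, wt, Finset.sum_filter, ← Finset.sum_add_distrib]
  exact Finset.sum_congr rfl fun C _ => by split_ifs <;> simp

noncomputable def pairWt (x y : ℕ) (b : Bool) : ℕ :=
  if ({(x, false), (y, b)} : Clause) ∈ F then w {(x, false), (y, b)} else 0

lemma HardFormula.wt_eq (hF : HardFormula F) :
    wt w F = ∑ x ∈ unitVars F, w {(x, true)} +
      ∑ y ∈ vars F \ unitVars F, ∑ x ∈ unitVars F,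
        (pairWt F w x y true + pairWt F w x y false) := by
  rw [wt, hF.sum_eq_units_add_pairs]
  simp [pairWt, add_comm]

lemma HardFormula.unsatWt_eq (hF : HardFormula F) (τ : ℕ → Bool) :
    unsatWt w τ F = ∑ x ∈ unitVars F, (if τ x then 0 else w {(x, true)}) +
      ∑ y ∈ vars F \ unitVars F, ∑ x ∈ unitVars F,
        (if τ x then pairWt F w x y (!τ y) else 0) := by
  rw [unsatWt, hF.sum_eq_units_add_pairs]
  congr 1
  · simp [satC_singleton_iff]
  · refine Finset.sum_congr rfl fun y _ => Finset.sum_congr rfl fun x _ => ?_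
    cases hx : τ x <;> cases hy : τ y <;> simp [satC_pair_iff, pairWt, hx, hy]

end WeightedAssignment

section Sampling

variable (F : Finset Clause) (w : Clause → ℕ)

-- The weight of the clauses `{¬x, ±y}` falsified when the unit variables follow `σ` and `y := c`.
noncomputable def loss (σ : unitVars F → Fin 3) (y : ℕ) (c : Bool) : ℕ :=
  ∑ x : unitVars F, if σ x ≠ 0 then pairWt F w x y (!c) else 0

noncomputable def sampleAssign (σ : unitVars F → Fin 3) : ℕ → Bool := fun v =>
  if h : v ∈ unitVars F then σ ⟨v, h⟩ ≠ 0 else loss F w σ v true ≤ loss F w σ v false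

variable {F w}

lemma sampleAssign_coe (σ : unitVars F → Fin 3) (x : unitVars F) :
    sampleAssign F w σ x = decide (σ x ≠ 0) := by
  simp [sampleAssign]

lemma loss_sampleAssign (σ : unitVars F → Fin 3) {y : ℕ} (hy : y ∉ unitVars F) :
    loss F w σ y (sampleAssign F w σ y) = min (loss F w σ y true) (loss F w σ y false) := by
  by_cases h : loss F w σ y true ≤ loss F w σ y false
  · simp [sampleAssign, hy, h]
  · simp [sampleAssign, hy, h, (not_le.mp h).le]

lemma HardFormula.unsatWt_sampleAssign (hF : HardFormula F) (σ : unitVars F → Fin 3) :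
    unsatWt w (sampleAssign F w σ) F =
      ∑ x : unitVars F, (if σ x = 0 then w {((x : ℕ), true)} else 0) +
      ∑ y ∈ vars F \ unitVars F, min (loss F w σ y true) (loss F w σ y false) := by
  rw [hF.unsatWt_eq]
  congr 1
  · rw [← Finset.sum_coe_sort]
    simp [sampleAssign_coe]
  · refine Finset.sum_congr rfl fun y hy => ?_
    rw [← Finset.sum_coe_sort, ← loss_sampleAssign σ (Finset.mem_sdiff.mp hy).2, loss]
    simp [sampleAssign_coe]

end Sampling

section Expectation

variable {F : Finset Clause} {w : Clause → ℕ}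

lemma exists_pairWt_ne (h3 : Sat3 F) (hF : HardFormula F) (hw : ∀ C ∈ F, 0 < w C) {y : ℕ}
    (hy : y ∈ vars F \ unitVars F) :
    ∃ x : unitVars F, pairWt F w x y false ≠ pairWt F w x y true := by
  obtain ⟨hyF, hyU⟩ := Finset.mem_sdiff.mp hy
  obtain ⟨C, hC, hyC⟩ := Finset.mem_sup.mp hyF
  rcases hF C hC with ⟨x, rfl⟩ | ⟨x, hx, y', -, b, rfl⟩
  · simp only [Finset.image_singleton, Finset.mem_singleton] at hyC
    exact absurd (mem_unitVars_iff.mpr ⟨_, hC, rfl, by simp [hyC]⟩) hyU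
  · obtain rfl : y' = y := by
      simp only [Finset.image_insert, Finset.image_singleton, Finset.mem_insert,
        Finset.mem_singleton] at hyC
      exact (hyC.resolve_left (ne_of_mem_unitVars hx hyU).symm).symm
    have hboth := h3.not_pair_mem_and_pair_mem (y := y') (hF.singleton_mem hx)
    refine ⟨⟨x, hx⟩, ?_⟩
    cases b
    · have hnot : ({(x, false), (y', true)} : Clause) ∉ F := fun h => hboth ⟨h, hC⟩
      simp [pairWt, hC, hnot, (hw _ hC).ne']
    · have hnot : ({(x, false), (y', false)} : Clause) ∉ F := fun h => hboth ⟨hC, h⟩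
      simp [pairWt, hC, hnot, (hw _ hC).ne]

lemma expect_loss_add (y : ℕ) :
    𝔼 σ : unitVars F → Fin 3, ((loss F w σ y true : ℝ) + loss F w σ y false) =
      2 / 3 * ∑ x : unitVars F, ((pairWt F w x y true : ℝ) + pairWt F w x y false) := by
  simp only [loss, Nat.cast_sum, Nat.cast_ite, Nat.cast_zero, ← Finset.sum_add_distrib,
    ite_add_ite, add_zero, Finset.expect_sum_comm, Finset.mul_sum]
  refine Finset.sum_congr rfl fun x _ => ?_
  rw [Fintype.expect_comp_apply x (fun u => if u ≠ 0 then _ else 0), expect_ite_ne_zero]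
  simp [add_comm]

lemma four_ninths_le_expect_abs_loss_sub (h3 : Sat3 F) (hF : HardFormula F)
    (hw : ∀ C ∈ F, 0 < w C) {y : ℕ} (hy : y ∈ vars F \ unitVars F) :
    (4 / 9 : ℝ) ≤ 𝔼 σ : unitVars F → Fin 3, |(loss F w σ y true : ℝ) - loss F w σ y false| := by
  obtain ⟨x, hx⟩ := exists_pairWt_ne h3 hF hw hy
  have ha : (fun x : unitVars F => (pairWt F w x y false : ℤ) - pairWt F w x y true) ≠ 0 :=
    Function.ne_iff.mpr ⟨x, by simpa [sub_eq_zero] using hx⟩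
  refine (four_ninths_le_expect_abs_sum _ ha).trans_eq (Finset.expect_congr rfl fun σ _ => ?_)
  simp only [loss, Nat.cast_sum, Nat.cast_ite, Nat.cast_zero, Int.cast_abs, Int.cast_sum,
    ← Finset.sum_sub_distrib]
  congr 1
  refine Finset.sum_congr rfl fun x _ => ?_
  split_ifs <;> simp

lemma expect_min_loss_le (h3 : Sat3 F) (hF : HardFormula F) (hw : ∀ C ∈ F, 0 < w C) {y : ℕ}
    (hy : y ∈ vars F \ unitVars F) :
    𝔼 σ : unitVars F → Fin 3, (min (loss F w σ y true) (loss F w σ y false) : ℝ) ≤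
      (∑ x : unitVars F, ((pairWt F w x y true : ℝ) + pairWt F w x y false)) / 3 - 2 / 9 := by
  have hmin : ∀ a b : ℝ, min a b = ((a + b) - |a - b|) / 2 := fun a b => by
    have := max_sub_min_eq_abs' a b
    have := min_add_max a b
    linarith
  simp only [hmin, ← Finset.expect_div, Finset.expect_sub_distrib, expect_loss_add]
  linarith [four_ninths_le_expect_abs_loss_sub h3 hF hw hy]

lemma HardFormula.expect_unsatWt_sampleAssign_le (hF : HardFormula F) (h3 : Sat3 F)
    (hw : ∀ C ∈ F, 0 < w C) :
    𝔼 σ : unitVars F → Fin 3, (unsatWt w (sampleAssign F w σ) F : ℝ) ≤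
      wt w F / 3 - 2 / 9 * (vars F \ unitVars F).card := by
  have hunit : ∀ x : unitVars F,
      𝔼 σ : unitVars F → Fin 3, (if σ x = 0 then (w {((x : ℕ), true)} : ℝ) else 0) =
        w {((x : ℕ), true)} / 3 := fun x => by
    rw [Fintype.expect_comp_apply x (fun u => if u = 0 then _ else 0), expect_ite_eq_zero]
  have hpair : ∀ y ∈ vars F \ unitVars F,
      𝔼 σ : unitVars F → Fin 3, (min (loss F w σ y true) (loss F w σ y false) : ℝ) ≤
        (∑ x ∈ unitVars F, ((pairWt F w x y true : ℝ) + pairWt F w x y false)) / 3 - 2 / 9 :=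
    fun y hy => by
      rw [← Finset.sum_coe_sort]
      exact expect_min_loss_le h3 hF hw hy
  simp only [hF.unsatWt_sampleAssign, Nat.cast_add, Nat.cast_sum, Nat.cast_ite, Nat.cast_zero,
    Nat.cast_min, Finset.expect_add_distrib, Finset.expect_sum_comm, hunit]
  rw [hF.wt_eq, Finset.sum_coe_sort (unitVars F) fun x => (w {(x, true)} : ℝ) / 3]
  have := Finset.sum_le_sum hpair
  push_cast
  simp only [Finset.sum_sub_distrib, Finset.sum_const, nsmul_eq_mul, ← Finset.sum_div] at this ⊢
  linarith

end Expectation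

theorem stmt13_general (F : Finset Clause) (w : Clause → ℕ)
    (hw : ∀ C ∈ F, 0 < w C) (h3 : Sat3 F) (hhard : HardFormula F) :
    ∃ τ : ℕ → Bool,
      (2:ℝ)/3 * wt w F + (2:ℝ)/9 * ((vars F \ unitVars F).card : ℝ) ≤ (satWt w τ F : ℝ) := by
  obtain ⟨σ, -, hσ⟩ := Finset.exists_le_of_expect_le Finset.univ_nonempty
    (hhard.expect_unsatWt_sampleAssign_le h3 hw)
  refine ⟨sampleAssign F w σ, ?_⟩
  have hsplit : (satWt w (sampleAssign F w σ) F : ℝ) + unsatWt w (sampleAssign F w σ) F =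
      wt w F := mod_cast satWt_add_unsatWt w (sampleAssign F w σ) F
  linarith

theorem stmt13 (F : Finset Clause) (w : Clause → ℕ)
    (hF : IsCNF F) (hw : ∀ C ∈ F, 0 < w C) (h3 : Sat3 F) (hhard : HardFormula F) :
    ∃ τ : ℕ → Bool,
      (2:ℝ)/3 * wt w F + (2:ℝ)/9 * ((vars F \ unitVars F).card : ℝ) ≤ (satWt w τ F : ℝ) :=
  stmt13_general F w hw h3 hhard
end

section
/- Let F be a hard 3-satisfiable weighted CNF formula (every clause is a positive unit clause {x_i}, or {not x_i, y_j} or {not x_i, not y_j} with x_i a unit variable and y_j not). Let n1 be the number of unit variables. Then there exists an assignment tau with sat_tau(F) >= (2/3) w(F) + (1/6) n1. -/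
open Classical

namespace Stmt14

variable (F : Finset Clause) (w : Clause → ℕ)

noncomputable def Vt : Finset ℕ := vars F \ unitVars F

abbrev Omg (F : Finset Clause) := {v // v ∈ Vt F} → Bool

noncomputable def yA (σ : Omg F) : ℕ → Bool := fun n => if h : n ∈ Vt F then σ ⟨n, h⟩ else false

noncomputable def base (σ : Omg F) : ℕ → Bool :=
  fun n => if n ∈ unitVars F then true else yA F σ n

noncomputable def T (x : ℕ) : Finset Clause := F.filter (fun C => (x, false) ∈ C)

noncomputable def G (x : ℕ) : Finset Clause :=
  F.filter (fun C => (x, false) ∈ C ∨ C = {(x, true)})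

noncomputable def uu (x : ℕ) : ℕ := w ({(x, true)} : Clause)
noncomputable def ss (x : ℕ) : ℕ := ∑ C ∈ T F x, w C
noncomputable def term (σ : Omg F) (C : Clause) : ℕ := if SatC (base F σ) C then w C else 0
noncomputable def mm (x : ℕ) (σ : Omg F) : ℕ := ∑ C ∈ T F x, term F w σ C
noncomputable def τfin (σ : Omg F) : ℕ → Bool :=
  fun n => if n ∈ unitVars F then decide (ss F w n ≤ uu w n + mm F w n σ) else yA F σ n

lemma satC_pair (τ : ℕ → Bool) (x y : ℕ) (b : Bool) :
    SatC τ {(x, false), (y, b)} ↔ (τ x = false ∨ τ y = b) := by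
  simp [SatC]

lemma satC_unit (τ : ℕ → Bool) (x : ℕ) :
    SatC τ {(x, true)} ↔ τ x = true := by
  simp [SatC]

lemma unit_mem (hhard : HardFormula F) {x : ℕ} (hx : x ∈ unitVars F) :
    ({(x, true)} : Clause) ∈ F := by
  rw [unitVars, Finset.mem_sup] at hx
  obtain ⟨C, hC, hxC⟩ := hx
  rw [Finset.mem_filter] at hC
  obtain ⟨hCF, hcard⟩ := hC
  rcases hhard C hCF with ⟨z, rfl⟩ | ⟨z, hz, y, hy, b, rfl⟩
  · simp at hxC
    subst hxC; exact hCF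
  · exfalso
    obtain ⟨a, ha⟩ := Finset.card_eq_one.mp hcard
    have h1 : (z, false) ∈ ({a} : Clause) := ha ▸ (by simp)
    have h2 : (y, b) ∈ ({a} : Clause) := ha ▸ (by simp)
    rw [Finset.mem_singleton] at h1 h2
    have : z = y := by rw [← h2] at h1; exact (Prod.mk.injEq _ _ _ _ ▸ h1).1
    exact hy (this ▸ hz)
lemma T_shape (hhard : HardFormula F) {x : ℕ} (hx : x ∈ unitVars F) {C : Clause}
    (hC : C ∈ T F x) :
    ∃ y b, y ∈ Vt F ∧ y ∉ unitVars F ∧ x ≠ y ∧ C = {(x, false), (y, b)} := by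
  rw [T, Finset.mem_filter] at hC
  obtain ⟨hCF, hxC⟩ := hC
  rcases hhard C hCF with ⟨z, rfl⟩ | ⟨z, hz, y, hy, b, rfl⟩
  · simp at hxC
  · have hxy : x ≠ y := fun h => hy (h ▸ hx)
    have hxz : x = z := by
      rcases Finset.mem_insert.mp hxC with h | h
      · exact (Prod.mk.injEq _ _ _ _ ▸ h).1
      · rw [Finset.mem_singleton] at h
        exact absurd (Prod.mk.injEq _ _ _ _ ▸ h).1 hxy
    subst hxz
    have hyvars : y ∈ vars F := by
      rw [vars, Finset.mem_sup]
      exact ⟨_, hCF, Finset.mem_image.mpr ⟨(y, b), by simp, rfl⟩⟩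
    exact ⟨y, b, Finset.mem_sdiff.mpr ⟨hyvars, hy⟩, hy, hxy, rfl⟩

lemma y_unique (h3 : Sat3 F) (hhard : HardFormula F) {x y : ℕ} (hx : x ∈ unitVars F)
    {b1 b2 : Bool} (h1 : ({(x, false), (y, b1)} : Clause) ∈ F)
    (h2 : ({(x, false), (y, b2)} : Clause) ∈ F) : b1 = b2 := by
  obtain ⟨τ, hτ0, hτ1, hτ2⟩ := h3 _ (unit_mem F hhard hx) _ h1 _ h2
  rw [satC_unit] at hτ0
  rw [satC_pair] at hτ1 hτ2
  rcases hτ1 with h | h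
  · rw [hτ0] at h; cases h
  rcases hτ2 with h' | h'
  · rw [hτ0] at h'; cases h'
  rw [← h, ← h']

lemma yA_eq (σ : Omg F) {y : ℕ} (hy : y ∈ Vt F) : yA F σ y = σ ⟨y, hy⟩ := dif_pos hy

lemma satC_base (σ : Omg F) {x y : ℕ} (hx : x ∈ unitVars F) (hy : y ∉ unitVars F) (b : Bool) :
    SatC (base F σ) {(x, false), (y, b)} ↔ yA F σ y = b := by
  rw [satC_pair]
  simp [base, hx, hy]

noncomputable def flipAll (σ : Omg F) : Omg F := fun v => ! σ v
noncomputable def flipAt (y0 : ℕ) (σ : Omg F) : Omg F :=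
  fun v => if (v : ℕ) = y0 then ! σ v else σ v

lemma flipAll_involutive : Function.Involutive (flipAll F) := by
  intro σ; funext v; simp [flipAll]

lemma flipAt_involutive (y0 : ℕ) : Function.Involutive (flipAt F y0) := by
  intro σ; funext v; by_cases h : (v : ℕ) = y0 <;> simp [flipAt, h]

lemma yA_flipAll (σ : Omg F) {y : ℕ} (hy : y ∈ Vt F) :
    yA F (flipAll F σ) y = ! yA F σ y := by
  simp [yA, hy, flipAll]

lemma yA_flipAt_self (σ : Omg F) {y : ℕ} (hy : y ∈ Vt F) :
    yA F (flipAt F y σ) y = ! yA F σ y := by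
  simp [yA, hy, flipAt]

lemma yA_flipAt_ne (σ : Omg F) (y0 : ℕ) {y : ℕ} (hne : y ≠ y0) :
    yA F (flipAt F y0 σ) y = yA F σ y := by
  by_cases h : y ∈ Vt F <;> simp [yA, h, flipAt, hne]

lemma term_le (σ : Omg F) (C : Clause) : term F w σ C ≤ w C := by
  rw [term]; split <;> omega

lemma mm_le_ss (x : ℕ) (σ : Omg F) : mm F w x σ ≤ ss F w x :=
  Finset.sum_le_sum (fun C _ => term_le F w σ C)

lemma term_flipAll (hhard : HardFormula F) {x : ℕ} (hx : x ∈ unitVars F) {C : Clause}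
    (hC : C ∈ T F x) (σ : Omg F) :
    term F w (flipAll F σ) C + term F w σ C = w C := by
  obtain ⟨y, b, hyVt, hy, hxy, rfl⟩ := T_shape F hhard hx hC
  rw [term, term, satC_base F _ hx hy, satC_base F _ hx hy, yA_flipAll F σ hyVt]
  cases hyA : yA F σ y <;> cases b <;> simp

lemma mm_flipAll (hhard : HardFormula F) {x : ℕ} (hx : x ∈ unitVars F) (σ : Omg F) :
    mm F w x (flipAll F σ) + mm F w x σ = ss F w x := by
  rw [mm, mm, ss, ← Finset.sum_add_distrib]
  exact Finset.sum_congr rfl (fun C hC => term_flipAll F w hhard hx hC σ)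
lemma mm_flipAt (h3 : Sat3 F) (hhard : HardFormula F) (hw : ∀ C ∈ F, 0 < w C)
    {x : ℕ} (hx : x ∈ unitVars F) {C0 : Clause} (hC0 : C0 ∈ T F x) {y0 : ℕ} {b0 : Bool}
    (hy0Vt : y0 ∈ Vt F) (hshape : C0 = {(x, false), (y0, b0)}) (σ : Omg F) :
    mm F w x (flipAt F y0 σ) ≠ mm F w x σ := by
  have hy0 : y0 ∉ unitVars F := (Finset.mem_sdiff.mp hy0Vt).2
  have hC0F : C0 ∈ F := (Finset.mem_filter.mp hC0).1
  have hw0 : 0 < w C0 := hw C0 hC0F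
  have hsplit : ∀ σ' : Omg F,
      mm F w x σ' = (∑ C ∈ (T F x).erase C0, term F w σ' C) + term F w σ' C0 :=
    fun σ' => (Finset.sum_erase_add _ _ hC0).symm
  have hrest : ∀ C ∈ (T F x).erase C0, term F w (flipAt F y0 σ) C = term F w σ C := by
    intro C hC
    obtain ⟨hne, hCT⟩ := Finset.mem_erase.mp hC
    obtain ⟨y, b, hyVt, hy, hxy, rfl⟩ := T_shape F hhard hx hCT
    have hCF : ({(x, false), (y, b)} : Clause) ∈ F := (Finset.mem_filter.mp hCT).1
    have hyy0 : y ≠ y0 := by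
      intro h; subst h
      apply hne
      have hb := y_unique F h3 hhard hx hCF (hshape ▸ hC0F)
      rw [hshape, hb]
    rw [term, term, satC_base F _ hx hy, satC_base F _ hx hy, yA_flipAt_ne F σ y0 hyy0]
  have hsum : (∑ C ∈ (T F x).erase C0, term F w (flipAt F y0 σ) C)
      = ∑ C ∈ (T F x).erase C0, term F w σ C := Finset.sum_congr rfl hrest
  intro heq
  rw [hsplit, hsplit, hsum] at heq
  have heq2 : term F w (flipAt F y0 σ) C0 = term F w σ C0 := by omega
  rw [hshape, term, term, satC_base F _ hx hy0, satC_base F _ hx hy0,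
    yA_flipAt_self F σ hy0Vt] at heq2
  cases hyA : yA F σ y0 <;> cases b0 <;> rw [hyA] at heq2 <;> simp at heq2 <;> (rw [hshape] at hw0; omega)

lemma sum_flipAll {M : Type*} [AddCommMonoid M] (f : Omg F → M) :
    ∑ σ : Omg F, f (flipAll F σ) = ∑ σ : Omg F, f σ :=
  Fintype.sum_bijective (flipAll F) (flipAll_involutive F).bijective _ _ (fun _ => rfl)

lemma sum_mm (hhard : HardFormula F) {x : ℕ} (hx : x ∈ unitVars F) :
    2 * ∑ σ : Omg F, mm F w x σ = Fintype.card (Omg F) * ss F w x := by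
  have h1 : ∑ σ : Omg F, mm F w x (flipAll F σ) = ∑ σ : Omg F, mm F w x σ :=
    sum_flipAll F _
  have h2 : ∑ σ : Omg F, (mm F w x (flipAll F σ) + mm F w x σ)
      = ∑ _σ : Omg F, ss F w x :=
    Finset.sum_congr rfl (fun σ _ => mm_flipAll F w hhard hx σ)
  rw [Finset.sum_add_distrib, h1] at h2
  rw [Finset.sum_const, Finset.card_univ, smul_eq_mul] at h2
  omega
lemma quarter (h3 : Sat3 F) (hhard : HardFormula F) (hw : ∀ C ∈ F, 0 < w C)
    {x : ℕ} (hx : x ∈ unitVars F) (hss : ss F w x = 2 * uu w x) (hu : 0 < uu w x) :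
    Fintype.card (Omg F) ≤ 4 * ∑ σ : Omg F, (mm F w x σ - uu w x) := by
  -- T F x is nonempty
  have hT : (T F x).Nonempty := by
    rw [Finset.nonempty_iff_ne_empty]
    intro h
    have : ss F w x = 0 := by rw [ss, h, Finset.sum_empty]
    omega
  obtain ⟨C0, hC0⟩ := hT
  obtain ⟨y0, b0, hy0Vt, hy0, hxy0, hshape⟩ := T_shape F hhard hx hC0
  -- symmetric sums
  have hB : ∑ σ : Omg F, (mm F w x σ - uu w x) = ∑ σ : Omg F, (uu w x - mm F w x σ) := by
    rw [← sum_flipAll F (fun σ => mm F w x σ - uu w x)]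
    refine Finset.sum_congr rfl (fun σ _ => ?_)
    have h := mm_flipAll F w hhard hx σ
    omega
  have h2 : 2 * ∑ σ : Omg F, (mm F w x σ - uu w x)
      = ∑ σ : Omg F, ((mm F w x σ - uu w x) + (uu w x - mm F w x σ)) := by
    rw [Finset.sum_add_distrib, ← hB]; ring
  -- counting
  set E := Finset.univ.filter (fun σ : Omg F => mm F w x σ = uu w x) with hE
  set NE := Finset.univ.filter (fun σ : Omg F => ¬ mm F w x σ = uu w x) with hNE
  have hcards : E.card + NE.card = Fintype.card (Omg F) := by
    rw [hE, hNE, Finset.card_filter_add_card_filter_not, Finset.card_univ]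
  have hmaps : ∀ σ ∈ E, flipAt F y0 σ ∈ NE := by
    intro σ hσ
    rw [hE, Finset.mem_filter] at hσ
    rw [hNE, Finset.mem_filter]
    refine ⟨Finset.mem_univ _, ?_⟩
    have := mm_flipAt F w h3 hhard hw hx hC0 hy0Vt hshape σ
    omega
  have hinj : E.card ≤ NE.card := by
    apply Finset.card_le_card_of_injOn (flipAt F y0) hmaps
    intro a _ b _ hab
    exact (flipAt_involutive F y0).injective hab
  have hlow : NE.card ≤ ∑ σ : Omg F, ((mm F w x σ - uu w x) + (uu w x - mm F w x σ)) := by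
    rw [hNE, Finset.card_filter]
    refine Finset.sum_le_sum (fun σ _ => ?_)
    by_cases h : mm F w x σ = uu w x <;> simp [h] <;> omega
  omega

lemma key_nat (h3 : Sat3 F) (hhard : HardFormula F) (hw : ∀ C ∈ F, 0 < w C)
    {x : ℕ} (hx : x ∈ unitVars F) :
    Fintype.card (Omg F) * (4 * (uu w x + ss F w x) + 1)
      ≤ 6 * ∑ σ : Omg F, max (uu w x + mm F w x σ) (ss F w x) := by
  have hu : 0 < uu w x := hw _ (unit_mem F hhard hx)
  set K := Fintype.card (Omg F) with hK
  rcases lt_trichotomy (ss F w x) (2 * uu w x) with hlt | heq | hgt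
  · have h1 : ∑ σ : Omg F, (uu w x + mm F w x σ)
        ≤ ∑ σ : Omg F, max (uu w x + mm F w x σ) (ss F w x) :=
      Finset.sum_le_sum (fun σ _ => le_max_left _ _)
    have h2 : ∑ σ : Omg F, (uu w x + mm F w x σ) = K * uu w x + ∑ σ : Omg F, mm F w x σ := by
      rw [Finset.sum_add_distrib, Finset.sum_const, Finset.card_univ, smul_eq_mul]
    have hA := sum_mm F w hhard hx
    have hstep : K * (4 * (uu w x + ss F w x) + 1) ≤ K * (6 * uu w x + 3 * ss F w x) :=
      Nat.mul_le_mul_left K (by omega)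
    calc K * (4 * (uu w x + ss F w x) + 1) ≤ K * (6 * uu w x + 3 * ss F w x) := hstep
      _ = 6 * (K * uu w x) + 3 * (K * ss F w x) := by ring
      _ = 6 * (K * uu w x) + 3 * (2 * ∑ σ : Omg F, mm F w x σ) := by rw [hA]
      _ = 6 * ∑ σ : Omg F, (uu w x + mm F w x σ) := by rw [h2]; ring
      _ ≤ 6 * ∑ σ : Omg F, max (uu w x + mm F w x σ) (ss F w x) := by omega
  · have hmax : ∀ σ : Omg F, max (uu w x + mm F w x σ) (ss F w x)
        = ss F w x + (mm F w x σ - uu w x) := by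
      intro σ; rw [heq]; omega
    have hQ := quarter F w h3 hhard hw hx heq hu
    calc K * (4 * (uu w x + ss F w x) + 1)
        = 6 * (K * ss F w x) + K := by rw [heq]; ring
      _ ≤ 6 * (K * ss F w x) + 6 * ∑ σ : Omg F, (mm F w x σ - uu w x) := by omega
      _ = 6 * (K * ss F w x + ∑ σ : Omg F, (mm F w x σ - uu w x)) := by ring
      _ = 6 * ∑ σ : Omg F, max (uu w x + mm F w x σ) (ss F w x) := by
          congr 1
          rw [Finset.sum_congr rfl (fun σ _ => hmax σ), Finset.sum_add_distrib,
            Finset.sum_const, Finset.card_univ, smul_eq_mul]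
  · have h1 : ∑ σ : Omg F, (ss F w x)
        ≤ ∑ σ : Omg F, max (uu w x + mm F w x σ) (ss F w x) :=
      Finset.sum_le_sum (fun σ _ => le_max_right _ _)
    rw [Finset.sum_const, Finset.card_univ, smul_eq_mul, ← hK] at h1
    have hstep : K * (4 * (uu w x + ss F w x) + 1) ≤ K * (6 * ss F w x) :=
      Nat.mul_le_mul_left K (by omega)
    calc K * (4 * (uu w x + ss F w x) + 1) ≤ K * (6 * ss F w x) := hstep
      _ = 6 * (K * ss F w x) := by ring
      _ ≤ 6 * ∑ σ : Omg F, max (uu w x + mm F w x σ) (ss F w x) := by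
          exact Nat.mul_le_mul_left 6 h1
lemma Cx_not_T (x : ℕ) : ({(x, true)} : Clause) ∉ T F x := by
  rw [T, Finset.mem_filter]
  rintro ⟨-, h⟩
  simp at h

lemma G_insert (hhard : HardFormula F) {x : ℕ} (hx : x ∈ unitVars F) :
    G F x = insert ({(x, true)} : Clause) (T F x) := by
  ext C
  rw [G, T, Finset.mem_filter, Finset.mem_insert, Finset.mem_filter]
  constructor
  · rintro ⟨hCF, h | rfl⟩
    · exact Or.inr ⟨hCF, h⟩
    · exact Or.inl rfl
  · rintro (rfl | ⟨hCF, h⟩)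
    · exact ⟨unit_mem F hhard hx, Or.inr rfl⟩
    · exact ⟨hCF, Or.inl h⟩

lemma mem_unitVars_of_unit {z : ℕ} (hCF : ({(z, true)} : Clause) ∈ F) : z ∈ unitVars F := by
  rw [unitVars, Finset.mem_sup]
  exact ⟨_, Finset.mem_filter.mpr ⟨hCF, by simp⟩, by simp⟩

lemma F_partition (hhard : HardFormula F) : F = (unitVars F).biUnion (G F) := by
  ext C
  simp only [Finset.mem_biUnion]
  constructor
  · intro hCF
    rcases hhard C hCF with ⟨z, rfl⟩ | ⟨z, hz, y, hy, b, rfl⟩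
    · exact ⟨z, mem_unitVars_of_unit F hCF, Finset.mem_filter.mpr ⟨hCF, Or.inr rfl⟩⟩
    · exact ⟨z, hz, Finset.mem_filter.mpr ⟨hCF, Or.inl (by simp)⟩⟩
  · rintro ⟨x, hx, hC⟩
    exact (Finset.mem_filter.mp hC).1

lemma G_disj (hhard : HardFormula F) :
    (↑(unitVars F) : Set ℕ).PairwiseDisjoint (G F) := by
  intro x1 h1 x2 h2 hne
  simp only [Function.onFun]
  rw [Finset.disjoint_left]
  intro C hC1 hC2
  rw [G, Finset.mem_filter] at hC1 hC2
  obtain ⟨hCF, hor1⟩ := hC1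
  obtain ⟨-, hor2⟩ := hC2
  apply hne
  rw [Finset.mem_coe] at h1 h2
  rcases hor1 with hm1 | rfl
  · rcases hor2 with hm2 | rfl
    · rcases hhard C hCF with ⟨z, rfl⟩ | ⟨z, hz, y, hy, b, rfl⟩
      · simp at hm1
      · have e1 : x1 = z := by
          rcases Finset.mem_insert.mp hm1 with h | h
          · exact (Prod.mk.injEq _ _ _ _ ▸ h).1
          · rw [Finset.mem_singleton] at h
            exact absurd ((Prod.mk.injEq _ _ _ _ ▸ h).1 ▸ h1) hy
        have e2 : x2 = z := by
          rcases Finset.mem_insert.mp hm2 with h | h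
          · exact (Prod.mk.injEq _ _ _ _ ▸ h).1
          · rw [Finset.mem_singleton] at h
            exact absurd ((Prod.mk.injEq _ _ _ _ ▸ h).1 ▸ h2) hy
        rw [e1, e2]
    · simp at hm1
  · rcases hor2 with hm2 | he
    · simp at hm2
    · have := Finset.singleton_injective he
      exact ((Prod.mk.injEq _ _ _ _ ▸ this).1)

lemma group_val (h3 : Sat3 F) (hhard : HardFormula F) {x : ℕ} (hx : x ∈ unitVars F)
    (σ : Omg F) :
    ∑ C ∈ G F x, (if SatC (τfin F w σ) C then w C else 0)
      = max (uu w x + mm F w x σ) (ss F w x) := by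
  rw [G_insert F hhard hx, Finset.sum_insert (Cx_not_T F x)]
  by_cases hcond : ss F w x ≤ uu w x + mm F w x σ
  · have hτx : τfin F w σ x = true := by simp [τfin, hx, hcond]
    have h1 : (if SatC (τfin F w σ) {(x, true)} then w {(x, true)} else 0) = uu w x := by
      rw [if_pos ((satC_unit _ x).mpr hτx)]; rfl
    have h2 : ∀ C ∈ T F x, (if SatC (τfin F w σ) C then w C else 0) = term F w σ C := by
      intro C hC
      obtain ⟨y, b, hyVt, hy, hxy, rfl⟩ := T_shape F hhard hx hC
      rw [term]
      have hiff : SatC (τfin F w σ) {(x, false), (y, b)}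
          ↔ SatC (base F σ) {(x, false), (y, b)} := by
        rw [satC_pair, satC_base F σ hx hy, hτx]
        simp [τfin, hy]
      rw [if_congr hiff rfl rfl]
    rw [h1, Finset.sum_congr rfl h2]
    exact (max_eq_left hcond).symm
  · have hτx : τfin F w σ x = false := by simp [τfin, hx, hcond]
    have h1 : (if SatC (τfin F w σ) {(x, true)} then w {(x, true)} else 0) = 0 := by
      rw [if_neg]
      rw [satC_unit, hτx]
      simp
    have h2 : ∀ C ∈ T F x, (if SatC (τfin F w σ) C then w C else 0) = w C := by
      intro C hC
      obtain ⟨y, b, hyVt, hy, hxy, rfl⟩ := T_shape F hhard hx hC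
      rw [if_pos ((satC_pair _ x y b).mpr (Or.inl hτx))]
    rw [h1, Finset.sum_congr rfl h2, ← ss]
    omega
lemma satWt_eq (h3 : Sat3 F) (hhard : HardFormula F) (σ : Omg F) :
    satWt w (τfin F w σ) F
      = ∑ x ∈ unitVars F, max (uu w x + mm F w x σ) (ss F w x) := by
  rw [satWt, Finset.sum_filter]
  calc ∑ C ∈ F, (if SatC (τfin F w σ) C then w C else 0)
      = ∑ C ∈ (unitVars F).biUnion (G F), (if SatC (τfin F w σ) C then w C else 0) := by
        rw [← F_partition F hhard]
    _ = ∑ x ∈ unitVars F, ∑ C ∈ G F x, (if SatC (τfin F w σ) C then w C else 0) :=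
        Finset.sum_biUnion (G_disj F hhard)
    _ = ∑ x ∈ unitVars F, max (uu w x + mm F w x σ) (ss F w x) :=
        Finset.sum_congr rfl (fun x hx => group_val F w h3 hhard hx σ)

lemma wt_eq (hhard : HardFormula F) :
    wt w F = ∑ x ∈ unitVars F, (uu w x + ss F w x) := by
  rw [wt]
  calc ∑ C ∈ F, w C = ∑ C ∈ (unitVars F).biUnion (G F), w C := by
        rw [← F_partition F hhard]
    _ = ∑ x ∈ unitVars F, ∑ C ∈ G F x, w C := Finset.sum_biUnion (G_disj F hhard)
    _ = ∑ x ∈ unitVars F, (uu w x + ss F w x) := by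
        refine Finset.sum_congr rfl (fun x hx => ?_)
        rw [G_insert F hhard hx, Finset.sum_insert (Cx_not_T F x)]
        rfl

end Stmt14

theorem stmt14' (F : Finset Clause) (w : Clause → ℕ)
    (hw : ∀ C ∈ F, 0 < w C) (h3 : Sat3 F) (hhard : HardFormula F) :
    ∃ τ : ℕ → Bool,
      (2:ℝ)/3 * wt w F + (1:ℝ)/6 * ((unitVars F).card : ℝ) ≤ (satWt w τ F : ℝ) := by
  classical
  open Stmt14 in
  set K := Fintype.card (Omg F) with hK
  have hKpos : 0 < K := Fintype.card_pos
  have havg : (K : ℝ) * ((2:ℝ)/3 * (wt w F : ℝ) + 1/6 * ((unitVars F).card : ℝ))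
      ≤ ∑ σ : Omg F, ((satWt w (τfin F w σ) F : ℕ) : ℝ) := by
    have hx6 : ∀ x ∈ unitVars F, (K:ℝ) * ((2:ℝ)/3 * ((uu w x : ℝ) + (ss F w x : ℝ)) + 1/6)
        ≤ ∑ σ : Omg F, max ((uu w x : ℝ) + (mm F w x σ : ℝ)) ((ss F w x : ℝ)) := by
      intro x hx
      have h := key_nat F w h3 hhard hw hx
      have h' := (Nat.cast_le (α := ℝ)).mpr h
      push_cast at h'
      rw [← hK] at h'
      linarith
    have hswap : ∑ σ : Omg F, ((satWt w (τfin F w σ) F : ℕ) : ℝ)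
        = ∑ x ∈ unitVars F,
            ∑ σ : Omg F, max ((uu w x : ℝ) + (mm F w x σ : ℝ)) ((ss F w x : ℝ)) := by
      simp_rw [satWt_eq F w h3 hhard]
      push_cast
      rw [Finset.sum_comm]
    have hL : ∑ x ∈ unitVars F, (K:ℝ) * ((2:ℝ)/3 * ((uu w x : ℝ) + (ss F w x : ℝ)) + 1/6)
        = (K:ℝ) * ((2:ℝ)/3 * (wt w F : ℝ) + 1/6 * ((unitVars F).card : ℝ)) := by
      rw [wt_eq F w hhard, ← Finset.mul_sum]
      congr 1
      push_cast
      rw [Finset.sum_add_distrib, ← Finset.mul_sum, Finset.sum_const, nsmul_eq_mul]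
      ring
    rw [hswap, ← hL]
    exact Finset.sum_le_sum hx6
  obtain ⟨σ, hσ⟩ : ∃ σ : Omg F,
      (2:ℝ)/3 * (wt w F : ℝ) + 1/6 * ((unitVars F).card : ℝ)
        ≤ ((satWt w (τfin F w σ) F : ℕ) : ℝ) := by
    by_contra hcon
    push_neg at hcon
    have hlt : ∑ σ : Omg F, ((satWt w (τfin F w σ) F : ℕ) : ℝ)
        < ∑ _σ : Omg F,
            ((2:ℝ)/3 * (wt w F : ℝ) + 1/6 * ((unitVars F).card : ℝ)) :=
      Finset.sum_lt_sum_of_nonempty Finset.univ_nonempty (fun σ _ => hcon σ)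
    rw [Finset.sum_const, Finset.card_univ, nsmul_eq_mul, ← hK] at hlt
    linarith
  exact ⟨τfin F w σ, by exact_mod_cast hσ⟩

theorem stmt14 (F : Finset Clause) (w : Clause → ℕ)
    (hF : IsCNF F) (hw : ∀ C ∈ F, 0 < w C) (h3 : Sat3 F) (hhard : HardFormula F) :
    ∃ τ : ℕ → Bool,
      (2:ℝ)/3 * wt w F + (1:ℝ)/6 * ((unitVars F).card : ℝ) ≤ (satWt w τ F : ℝ) :=
  stmt14' F w hw h3 hhard
end
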